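/- Assume (F0), (F1) and (F2). Then the topological entropy of the restriction of G to its maximal invariant set Λ_G equals log 3. -/

import Mathlib

open Set Filter MeasureTheory

noncomputable section

/-- Condition (F0) on the fiber map `f₀`. -/
def F0cond (f₀ : ℝ → ℝ) (β₀ lam₀ : ℝ) : Prop :=
  ContDiff ℝ 1 f₀ ∧ Set.MapsTo f₀ (Set.Icc 0 1) (Set.Icc 0 1) ∧
  StrictMonoOn f₀ (Set.Icc 0 1) ∧ f₀ 0 = 0 ∧ f₀ 1 = 1 ∧
  (∀ x ∈ Set.Ioo (0:ℝ) 1, x < f₀ x) ∧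
  deriv f₀ 0 = β₀ ∧ 1 < β₀ ∧ deriv f₀ 1 = lam₀ ∧ 0 < lam₀ ∧ lam₀ < 1 ∧
  (∀ x ∈ Set.Icc (0:ℝ) 1, lam₀ ≤ deriv f₀ x)

/-- Condition (F1) on the fiber map `f₁`. -/
def F1cond (f₁ : ℝ → ℝ) (γ lam₀ : ℝ) : Prop :=
  (∀ x, f₁ x = γ * (1 - x)) ∧ lam₀ ≤ γ ∧ γ < 1

/-- Condition (F2) on the fiber map `f₂`. -/
def F2cond (f₂ : ℝ → ℝ) (β₂ lam₀ : ℝ) : Prop :=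
  ContDiff ℝ 1 f₂ ∧ Set.MapsTo f₂ (Set.Icc 0 1) (Set.Icc 0 1) ∧
  StrictMonoOn f₂ (Set.Icc 0 1) ∧ f₂ 0 = 0 ∧
  deriv f₂ 0 = β₂ ∧ 1 < β₂ ∧ (∀ x ∈ Set.Icc (0:ℝ) 1, lam₀ ≤ deriv f₂ x) ∧
  ∃ p₂, p₂ ∈ Set.Ioo (0:ℝ) 1 ∧ f₂ p₂ = p₂ ∧ (∀ x ∈ Set.Ioo 0 p₂, x < f₂ x) ∧
    (∀ x ∈ Set.Ioc p₂ 1, f₂ x < x)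

/-- Condition (F01). -/
def F01cond (f₀ : ℝ → ℝ) (β₀ lam₀ γ : ℝ) : Prop :=
  AntitoneOn (deriv f₀) (Set.Icc 0 1) ∧
  1 < γ * (lam₀ ^ 3 * (1 - lam₀) / (1 - β₀⁻¹))

/-- Condition (F012), with `H = [0,δ]`, `H' = [1-γ⁻¹δ,1]`, and the derived constants
`β' = βpr`, `β_H = βH`, `λ' = lampr`, `L`. -/
def F012cond (f₀ f₁ f₂ : ℝ → ℝ) (γ lam₀ β₀ β₂ δ βpr βH lampr : ℝ) (L : ℕ) : Prop :=
  (∀ x ∈ Set.Icc (0:ℝ) 1, deriv f₀ x ≤ max β₀ β₂ ∧ deriv f₂ x ≤ max β₀ β₂) ∧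
  0 < δ ∧ δ < γ ∧
  (f₁ '' Set.Icc 0 δ) ∩ Set.Icc 0 δ = ∅ ∧
  (f₁ '' Set.Icc (1 - γ⁻¹ * δ) 1) ∩ Set.Icc (1 - γ⁻¹ * δ) 1 = ∅ ∧
  (f₁ '' Set.Icc 0 1) ∩ Set.Icc (1 - γ⁻¹ * δ) 1 = ∅ ∧
  (f₂ '' Set.Icc 0 1) ∩ Set.Icc (1 - γ⁻¹ * δ) 1 = ∅ ∧
  IsGreatest {y | ∃ x ∈ Set.Icc δ 1, y = max (deriv f₀ x) (deriv f₂ x)} βpr ∧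
  1 < βpr ∧ βpr < min β₀ β₂ ∧
  IsLeast {y | ∃ x ∈ Set.Icc (0:ℝ) δ, y = min (deriv f₀ x) (deriv f₂ x)} βH ∧
  1 < βH ∧ βH < min β₀ β₂ ∧
  IsGreatest {y | ∃ x ∈ Set.Icc (1 - γ⁻¹ * δ) 1, y = deriv f₀ x} lampr ∧
  lampr < 1 ∧
  |Real.log lam₀| * Real.log (max β₀ β₂) / Real.log βH - |Real.log lampr|
      + (2 / 3) * Real.log (max β₀ β₂) < (3 / 4) * Real.log βpr ∧
  1 ≤ L ∧
  4 * |Real.log lam₀| * Real.log (max β₀ β₂) / (Real.log βH * Real.log βpr) < (L : ℝ) ∧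
  Real.log ((max β₀ β₂) ^ L * γ) / ((L : ℝ) + 1) < Real.log βpr

/-- `f_{ξ_{n-1}} ∘ ⋯ ∘ f_{ξ₀}`. -/
def seqComp (fs : Fin 3 → ℝ → ℝ) (ξ : ℕ → Fin 3) : ℕ → ℝ → ℝ
  | 0 => id
  | n + 1 => fun x => fs (ξ n) (seqComp fs ξ n x)

/-- The upper Lyapunov exponent of the point `p` under the itinerary `ξ`. -/
def lyapUpper (fs : Fin 3 → ℝ → ℝ) (p : ℝ) (ξ : ℕ → Fin 3) : ℝ :=
  Filter.limsup (fun n : ℕ => (1 / (n : ℝ)) * Real.log |deriv (seqComp fs ξ n) p|) Filter.atTop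

/-- Membership in the exceptional set `E`. -/
def exceptional (fs : Fin 3 → ℝ → ℝ) (p : ℝ) (ξ : ℕ → Fin 3) : Prop :=
  ∃ m : ℕ, seqComp fs ξ m p = 0 ∧ ∀ j, m ≤ j → (ξ j = 0 ∨ ξ j = 2)

/-- `f_[w] = f_{w_{m-1}} ∘ ⋯ ∘ f_{w₀}` for a finite word `w`. -/
def wordComp {α : Type*} (fs : α → ℝ → ℝ) (w : List α) : ℝ → ℝ :=
  fun x => w.foldl (fun y i => fs i y) x

/-- The two-sided sequence space `Σ₃`. -/
instance : UniformSpace (Fin 3) := ⊥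

abbrev Sig3 := ℤ → Fin 3

/-- The state space `Σ₃ × [0,1]`. -/
abbrev XSp := Sig3 × (Set.Icc (0:ℝ) 1)

instance : UniformSpace (Fin 3) := ⊥

/-- The left shift on `Σ₃`. -/
def shiftMap (ξ : Sig3) : Sig3 := fun i => ξ (i + 1)

/-- The step skew product `G(ξ,x) = (σξ, f_{ξ₀}(x))` on `Σ₃ × [0,1]`. -/
def Gmap (fs : Fin 3 → ℝ → ℝ) : XSp → XSp :=
  fun p => (shiftMap p.1, Set.projIcc 0 1 (by norm_num) (fs (p.1 0) (p.2 : ℝ)))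

/-- The maximal invariant set `Λ_G = ⋂ₙ Gⁿ(Σ₃ × [0,1])`. -/
def LamG (fs : Fin 3 → ℝ → ℝ) : Set XSp := ⋂ n : ℕ, (Gmap fs)^[n] '' Set.univ

/-- The lateral horseshoe `Λ₀₂`. -/
def Lam02 : Set XSp := {p | (∀ i, p.1 i ≠ 1) ∧ (p.2 : ℝ) = 0}

/-- The central derivative potential `φ(ξ,x) = log|f_{ξ₀}'(x)|`. -/
def phiC (fs : Fin 3 → ℝ → ℝ) (p : XSp) : ℝ := Real.log |deriv (fs (p.1 0)) (p.2 : ℝ)|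

/-- The central Lyapunov exponent `χ(μ) = ∫ φ dμ` of a measure. -/
def chiOf (fs : Fin 3 → ℝ → ℝ) (μ : Measure XSp) : ℝ := ∫ p, phiC fs p ∂μ

/-- `ν` is the `(p 0, p 1, p 2)`-Bernoulli measure on `Σ₃`. -/
def IsBernoulli (p : Fin 3 → ℝ) (ν : Measure Sig3) : Prop :=
  IsProbabilityMeasure ν ∧ ∀ (s : Finset ℤ) (a : ℤ → Fin 3),
    ν {ξ | ∀ i ∈ s, ξ i = a i} = ENNReal.ofReal (∏ i ∈ s, p (a i))

/-! The projection `(ξ, x) ↦ ξ` semiconjugates `G` to the full shift on three symbols and,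
by Cantor's intersection theorem applied to the compact sets `Gⁿ(Σ₃ × [0,1])`, maps `Λ_G` onto
`Σ₃`; hence `h(G|Λ_G) ≥ log 3`.

Conversely, all fibre maps are monotone or antitone, so along a fixed itinerary the variation
`V(x) = ∑_{k<n} |f^k x - f^k 0|` dominates every `|f^k x - f^k y|`. Since `0 ≤ V ≤ n`, grouping
the points of `[0,1]` by `⌊V / ε⌋` yields an `(n, ε)`-cover of each fibre with at most
`n / ε + 1` elements, so the fibres add only polynomial growth to the `3ⁿ` itineraries and
`h(G) ≤ log 3`. -/

open Function Dynamics ExpGrowth unitInterval Uniformity Topology ENNReal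

lemma image_iInter_iterate_image_eq_univ {X Y : Type*} [TopologicalSpace X] [CompactSpace X]
    [T2Space X] [TopologicalSpace Y] [T1Space Y] {T : X → X} {S : Y → Y} {φ : X → Y}
    (hT : Continuous T) (hφ : Continuous φ) (hconj : Semiconj φ T S) (hφs : Surjective φ)
    (hS : Surjective S) :
    φ '' ⋂ n : ℕ, T^[n] '' univ = univ := by
  refine eq_univ_of_forall fun y => ?_
  set C : ℕ → Set X := fun n => φ ⁻¹' {y} ∩ T^[n] '' univ
  have hC_ne (n : ℕ) : (C n).Nonempty := by
    obtain ⟨z, rfl⟩ := hS.iterate n y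
    obtain ⟨x, rfl⟩ := hφs z
    exact ⟨T^[n] x, hconj.iterate_right n x, x, trivial, rfl⟩
  have hC_closed (n : ℕ) : IsClosed (C n) :=
    (isClosed_singleton.preimage hφ).inter (isCompact_univ.image (hT.iterate n)).isClosed
  have hC_anti (n : ℕ) : C (n + 1) ⊆ C n := by
    refine inter_subset_inter_right _ ?_
    rw [iterate_succ, image_comp]
    exact image_mono (subset_univ _)
  obtain ⟨x, hx⟩ := IsCompact.nonempty_iInter_of_sequence_nonempty_isCompact_isClosed C hC_anti
    hC_ne (hC_closed 0).isCompact hC_closed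
  simp only [C, mem_iInter, mem_inter_iff] at hx
  exact ⟨x, mem_iInter.2 fun n => (hx n).2, (hx 0).1⟩

lemma abs_sub_eq_of_monotone_or_antitone {X : Type*} [Preorder X] {g : X → ℝ}
    (hg : Monotone g ∨ Antitone g) {a x y : X} (hax : a ≤ x) (hxy : x ≤ y) :
    |g y - g x| = |g y - g a| - |g x - g a| := by
  rcases hg with hg | hg
  · have := hg hax; have := hg hxy
    rw [abs_of_nonneg (by linarith), abs_of_nonneg (by linarith), abs_of_nonneg (by linarith)]
    ring
  · have := hg hax; have := hg hxy
    rw [abs_of_nonpos (by linarith), abs_of_nonpos (by linarith), abs_of_nonpos (by linarith)]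
    ring

def orbitVariation {X : Type*} (g : ℕ → X → ℝ) (a : X) (n : ℕ) (x : X) : ℝ :=
  ∑ j ∈ Finset.range n, |g j x - g j a|

lemma abs_sub_le_abs_sub_orbitVariation {X : Type*} [LinearOrder X] {g : ℕ → X → ℝ}
    (hg : ∀ k, Monotone (g k) ∨ Antitone (g k)) {a x y : X} (hx : a ≤ x) (hy : a ≤ y) {k n : ℕ}
    (hk : k < n) :
    |g k x - g k y| ≤ |orbitVariation g a n x - orbitVariation g a n y| := by
  wlog hxy : x ≤ y generalizing x y
  · rw [abs_sub_comm, abs_sub_comm (orbitVariation g a n x)]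
    exact this hy hx (le_of_not_ge hxy)
  rw [abs_sub_comm, abs_sub_comm (orbitVariation g a n x), orbitVariation, orbitVariation,
    ← Finset.sum_sub_distrib]
  calc |g k y - g k x| ≤ ∑ j ∈ Finset.range n, |g j y - g j x| :=
        Finset.single_le_sum (f := fun j => |g j y - g j x|) (fun j _ => abs_nonneg _)
          (Finset.mem_range.2 hk)
    _ = ∑ j ∈ Finset.range n, (|g j y - g j a| - |g j x - g j a|) :=
        Finset.sum_congr rfl fun j _ => abs_sub_eq_of_monotone_or_antitone (hg j) hx hxy
    _ ≤ _ := le_abs_self _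

lemma exists_finset_abs_sub_lt {X : Type*} [Nonempty X] (V : X → ℝ) {c ε : ℝ} (hε : 0 < ε)
    (hV : ∀ x, V x ∈ Icc 0 c) :
    ∃ t : Finset X, t.card ≤ ⌊c / ε⌋₊ + 1 ∧ ∀ x, ∃ y ∈ t, |V x - V y| < ε := by
  classical
  set b : X → ℕ := fun x => ⌊V x / ε⌋₊
  refine ⟨(Finset.range (⌊c / ε⌋₊ + 1)).image (invFun b),
    Finset.card_image_le.trans (Finset.card_range _).le,
    fun x => ⟨invFun b (b x), Finset.mem_image_of_mem _ ?_, ?_⟩⟩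
  · exact Finset.mem_range_succ_iff.2
      (Nat.floor_mono (div_le_div_of_nonneg_right (hV x).2 hε.le))
  have hb : b (invFun b (b x)) = b x := invFun_eq ⟨x, rfl⟩
  set y := invFun b (b x)
  have hx₁ := Nat.floor_le (div_nonneg (hV x).1 hε.le)
  have hx₂ := Nat.lt_floor_add_one (V x / ε)
  have hy₁ := Nat.floor_le (div_nonneg (hV y).1 hε.le)
  have hy₂ := Nat.lt_floor_add_one (V y / ε)
  simp only [b] at hb
  rw [hb] at hy₁ hy₂
  have : |V x / ε - V y / ε| < 1 := abs_sub_lt_iff.2 ⟨by linarith, by linarith⟩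
  rwa [← sub_div, abs_div, abs_of_pos hε, div_lt_one hε] at this

lemma exists_finset_forall_dist_lt {g : ℕ → I → I} (hg : ∀ k, Monotone (g k) ∨ Antitone (g k))
    (n : ℕ) {ε : ℝ} (hε : 0 < ε) :
    ∃ t : Finset I, t.card ≤ ⌊n / ε⌋₊ + 1 ∧ ∀ x, ∃ y ∈ t, ∀ k < n, dist (g k x) (g k y) < ε := by
  set g' : ℕ → I → ℝ := fun k x => g k x
  have hg' (k : ℕ) : Monotone (g' k) ∨ Antitone (g' k) :=
    (hg k).imp (Subtype.mono_coe _).comp (Subtype.mono_coe _).comp_antitone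
  have hV (x : I) : orbitVariation g' 0 n x ∈ Icc 0 (n : ℝ) := by
    refine ⟨Finset.sum_nonneg fun j _ => abs_nonneg _, ?_⟩
    refine (Finset.sum_le_card_nsmul _ _ 1 fun j _ => ?_).trans_eq (by simp)
    exact abs_sub_le_iff.2 ⟨by linarith [nonneg (g j 0), le_one (g j x)],
      by linarith [nonneg (g j x), le_one (g j 0)]⟩
  obtain ⟨t, ht, hnet⟩ := exists_finset_abs_sub_lt _ hε hV
  refine ⟨t, ht, fun x => ?_⟩
  obtain ⟨y, hyt, hxy⟩ := hnet x
  exact ⟨y, hyt, fun k hk =>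
    (abs_sub_le_abs_sub_orbitVariation hg' nonneg' nonneg' hk).trans_lt hxy⟩

lemma floor_div_add_one_le (n : ℕ) (ε : ℝ) :
    ⌊n / ε⌋₊ + 1 ≤ (⌈ε⁻¹⌉₊ + 1) * (n + 1) := by
  have : ⌊n / ε⌋₊ ≤ n * ⌈ε⁻¹⌉₊ := Nat.floor_le_of_le (by
    rw [div_eq_mul_inv]; push_cast; gcongr; exact Nat.le_ceil _)
  nlinarith

lemma expGrowthSup_natCast_add_one : expGrowthSup (fun n : ℕ => (n + 1 : ℝ≥0∞)) = 0 := by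
  have h : Tendsto (fun n : ℕ => Real.log (n + 1) / n) atTop (𝓝 0) := by
    have := (Real.tendsto_pow_log_div_mul_add_atTop 1 (-1) 1 one_ne_zero).comp
      (tendsto_atTop_add_const_right atTop (1 : ℝ) tendsto_natCast_atTop_atTop)
    simpa [Function.comp_def] using this
  rw [expGrowthSup, ← EReal.coe_zero, ← (EReal.tendsto_coe.2 h).limsup_eq]
  refine limsup_congr (Eventually.of_forall fun n => ?_)
  rw [← ENNReal.ofReal_natCast, ← ENNReal.ofReal_one,
    ← ENNReal.ofReal_add n.cast_nonneg zero_le_one, ENNReal.log_ofReal,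
    if_neg (not_le.2 (by positivity)), EReal.coe_div]
  rfl

lemma ENNReal.log_three : ENNReal.log 3 = (Real.log 3 : EReal) := by
  rw [← ENNReal.ofReal_ofNat, ENNReal.log_ofReal]
  norm_num

lemma shiftMap_iterate (ξ : Sig3) (k : ℕ) : shiftMap^[k] ξ = fun i => ξ (i + k) := by
  induction k generalizing ξ with
  | zero => simp
  | succ k ih =>
    funext i
    rw [iterate_succ_apply, ih]
    simp only [shiftMap, Nat.cast_succ, add_assoc]

lemma shiftMap_surjective : Surjective shiftMap :=
  fun ξ => ⟨fun i => ξ (i - 1), funext fun i => by simp [shiftMap]⟩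

def cylinderRel (K : ℕ) : SetRel Sig3 Sig3 := {p | ∀ i : ℤ, |i| ≤ K → p.1 i = p.2 i}

lemma uniformity_basis_cylinderRel :
    (𝓤 Sig3).HasBasis (fun _ : ℕ => True) cylinderRel := by
  have h : 𝓤 Sig3 = ⨅ i : ℤ, 𝓟 {p : Sig3 × Sig3 | p.1 i = p.2 i} := by
    simp only [Pi.uniformity, bot_uniformity, comap_principal]
    rfl
  rw [h]
  refine (hasBasis_iInf_principal_finite _).to_hasBasis (fun t ht => ?_) fun K _ => ?_
  · obtain ⟨K, hK⟩ := (ht.image Int.natAbs).bddAbove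
    refine ⟨K, trivial, fun p hp => mem_iInter₂.2 fun i hi => hp i ?_⟩
    rw [Int.abs_eq_natAbs]
    exact_mod_cast hK (mem_image_of_mem _ hi)
  · refine ⟨Icc (-(K : ℤ)) K, finite_Icc _ _, fun p hp i hi => ?_⟩
    exact mem_iInter₂.1 hp i (abs_le.1 hi)

lemma pow_le_coverMincard_shiftMap (n : ℕ) :
    (3 ^ n : ℕ∞) ≤ coverMincard shiftMap univ (cylinderRel 0) n := by
  refine le_iInf₂ fun s hs => ?_
  let word (w : Fin n → Fin 3) : Sig3 := fun i => if h : i.toNat < n then w ⟨i.toNat, h⟩ else 0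
  have hcov (w : Fin n → Fin 3) : ∃ c ∈ s, ∀ k : Fin n, c k = w k := by
    obtain ⟨c, hc, hwc⟩ := hs (mem_univ (word w))
    refine ⟨c, hc, fun k => ?_⟩
    have := (mem_dynEntourage.1 hwc k k.2 0 (by simp)).symm
    simpa [shiftMap_iterate, word] using this
  choose c hcs hcw using hcov
  have hinj : Injective fun w => (⟨c w, hcs w⟩ : s) := fun w w' hww => funext fun k => by
    rw [← hcw w k, ← hcw w' k, Subtype.mk.inj hww]
  have := Fintype.card_le_of_injective _ hinj
  simp only [Fintype.card_fun, Fintype.card_fin, Fintype.card_coe] at this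
  exact_mod_cast this

lemma log_three_le_coverEntropy_shiftMap : (Real.log 3 : EReal) ≤ coverEntropy shiftMap univ := by
  refine le_trans ?_ (coverEntropyEntourage_le_coverEntropy _ _
    (uniformity_basis_cylinderRel.mem_of_mem (i := 0) trivial))
  have hlog : ENNReal.log 3 = (Real.log 3 : EReal) := by
    rw [← ENNReal.ofReal_ofNat, ENNReal.log_ofReal]
    norm_num
  rw [← hlog, ← expGrowthSup_pow]
  exact expGrowthSup_monotone fun n => by
    simpa using ENat.toENNReal_mono (pow_le_coverMincard_shiftMap n)

section SkewProduct

variable (fs : Fin 3 → ℝ → ℝ)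

def fiberStep (i : Fin 3) (x : I) : I := projIcc 0 1 zero_le_one (fs i x)

def fiberIter (ξ : Sig3) : ℕ → I → I
  | 0 => id
  | k + 1 => fiberStep fs (ξ k) ∘ fiberIter ξ k

lemma fiberIter_succ_apply (ξ : Sig3) (k : ℕ) (x : I) :
    fiberIter fs ξ (k + 1) x = fiberIter fs (shiftMap ξ) k (fiberStep fs (ξ 0) x) := by
  induction k with
  | zero => rfl
  | succ k ih =>
    simp only [fiberIter, comp_apply] at ih ⊢
    rw [← ih, shiftMap, Nat.cast_succ]

lemma Gmap_iterate (ξ : Sig3) (x : I) (k : ℕ) :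
    (Gmap fs)^[k] (ξ, x) = (shiftMap^[k] ξ, fiberIter fs ξ k x) := by
  induction k generalizing ξ x with
  | zero => rfl
  | succ k ih =>
    rw [iterate_succ_apply, Gmap, ih, fiberIter_succ_apply, ← iterate_succ_apply]
    rfl

lemma fiberIter_congr {ξ η : Sig3} {k : ℕ} (h : ∀ j < k, ξ j = η j) :
    fiberIter fs ξ k = fiberIter fs η k := by
  induction k with
  | zero => rfl
  | succ k ih =>
    simp only [fiberIter, h k k.lt_succ_self, ih fun j hj => h j (hj.trans k.lt_succ_self)]

variable {fs}

lemma fiberStep_continuous {i : Fin 3} (h : Continuous (fs i)) :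
    Continuous (fiberStep fs i) :=
  continuous_projIcc.comp (h.comp continuous_subtype_val)

lemma fiberStep_monotone {i : Fin 3} (h : MonotoneOn (fs i) (Icc 0 1)) :
    Monotone (fiberStep fs i) :=
  fun x y hxy => monotone_projIcc _ (h x.2 y.2 hxy)

lemma fiberStep_antitone {i : Fin 3} (h : AntitoneOn (fs i) (Icc 0 1)) :
    Antitone (fiberStep fs i) :=
  fun x y hxy => monotone_projIcc _ (h x.2 y.2 hxy)

lemma fiberIter_monotone_or_antitone
    (h : ∀ i, Monotone (fiberStep fs i) ∨ Antitone (fiberStep fs i)) (ξ : Sig3) (k : ℕ) :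
    Monotone (fiberIter fs ξ k) ∨ Antitone (fiberIter fs ξ k) := by
  induction k with
  | zero => exact .inl monotone_id
  | succ k ih =>
    rcases h (ξ k) with hs | hs <;> rcases ih with ho | ho
    exacts [.inl (hs.comp ho), .inr (hs.comp_antitone ho), .inr (hs.comp_monotone ho),
      .inl (hs.comp ho)]

lemma continuous_Gmap (h : ∀ i, Continuous (fiberStep fs i)) : Continuous (Gmap fs) := by
  have : DiscreteTopology (Fin 3) := ⟨rfl⟩
  have hstep : Continuous fun p : Fin 3 × I => fiberStep fs p.1 p.2 :=
    continuous_prod_of_discrete_left.2 h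
  refine .prodMk ?_ (hstep.comp (.prodMk ((continuous_apply 0).comp continuous_fst)
    continuous_snd))
  exact continuous_pi fun i => (continuous_apply (i + 1)).comp continuous_fst

lemma fst_image_LamG (h : ∀ i, Continuous (fiberStep fs i)) :
    Prod.fst '' LamG fs = univ :=
  image_iInter_iterate_image_eq_univ (continuous_Gmap h) continuous_fst (fun _ => rfl)
    Prod.fst_surjective shiftMap_surjective

lemma log_three_le_coverEntropy_LamG (hcont : ∀ i, Continuous (fiberStep fs i)) :
    (Real.log 3 : EReal) ≤ coverEntropy (Gmap fs) (LamG fs) := by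
  have hsemi : Semiconj Prod.fst (Gmap fs) shiftMap := fun _ => rfl
  calc (Real.log 3 : EReal) ≤ coverEntropy shiftMap univ := log_three_le_coverEntropy_shiftMap
    _ = coverEntropy shiftMap (Prod.fst '' LamG fs) := by rw [fst_image_LamG hcont]
    _ ≤ _ := coverEntropy_image_le_of_uniformContinuous hsemi uniformContinuous_fst _

lemma coverMincard_Gmap_le (hmono : ∀ i, Monotone (fiberStep fs i) ∨ Antitone (fiberStep fs i))
    (K n : ℕ) {ε : ℝ} (hε : 0 < ε) :
    coverMincard (Gmap fs) univ (entourageProd (cylinderRel K) {p | dist p.1 p.2 < ε}) n ≤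
      (3 ^ (n + 2 * K + 1) * (⌊n / ε⌋₊ + 1) : ℕ) := by
  classical
  -- the first `n` iterates of the `K`-cylinder relation only read the coordinates in `D`
  set D : Finset ℤ := Finset.Icc (-K) (n + K)
  let extend (w : D → Fin 3) : Sig3 := fun i => if hi : i ∈ D then w ⟨i, hi⟩ else 0
  have hextend (ξ : Sig3) (i : ℤ) (hi : i ∈ D) : extend (fun j => ξ j) i = ξ i := dif_pos hi
  choose t ht hnet using fun w => exists_finset_forall_dist_lt
    (fiberIter_monotone_or_antitone hmono (extend w)) n hε
  let s : Finset XSp := Finset.univ.biUnion fun w => (t w).image (extend w, ·)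
  have hcover : IsDynCoverOf (Gmap fs) univ
      (entourageProd (cylinderRel K) {p | dist p.1 p.2 < ε}) n s := by
    rintro ⟨ξ, x⟩ -
    obtain ⟨y, hyt, hy⟩ := hnet (fun j => ξ j) x
    refine ⟨_, Finset.mem_biUnion.2 ⟨_, Finset.mem_univ _, Finset.mem_image_of_mem _ hyt⟩, ?_⟩
    refine mem_dynEntourage.2 fun k hk => ?_
    rw [Gmap_iterate, Gmap_iterate, shiftMap_iterate, shiftMap_iterate]
    have horbit : fiberIter fs (extend fun j => ξ j) k = fiberIter fs ξ k :=
      fiberIter_congr fs fun j hj => hextend ξ j (by simp only [D, Finset.mem_Icc]; omega)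
    refine ⟨fun i hi => ?_, ?_⟩
    · exact (hextend ξ (i + k) (by simp only [D, Finset.mem_Icc]; grind)).symm
    · simpa only [mem_ofPred_eq, horbit] using hy k hk
  have hcard : s.card ≤ 3 ^ (n + 2 * K + 1) * (⌊n / ε⌋₊ + 1) := calc
    s.card ≤ ∑ w, ((t w).image (extend w, ·)).card := Finset.card_biUnion_le
    _ ≤ ∑ _w : D → Fin 3, (⌊n / ε⌋₊ + 1) :=
      Finset.sum_le_sum fun w _ => Finset.card_image_le.trans (ht w)
    _ = 3 ^ (n + 2 * K + 1) * (⌊n / ε⌋₊ + 1) := by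
      simp only [Finset.sum_const, Finset.card_univ, Fintype.card_fun, Fintype.card_coe, D,
        Int.card_Icc, smul_eq_mul, Fintype.card_fin]
      congr 2
      omega
  exact hcover.coverMincard_le_card.trans (by exact_mod_cast hcard)

lemma coverEntropyEntourage_Gmap_le
    (hmono : ∀ i, Monotone (fiberStep fs i) ∨ Antitone (fiberStep fs i)) (K : ℕ) {ε : ℝ}
    (hε : 0 < ε) :
    coverEntropyEntourage (Gmap fs) univ (entourageProd (cylinderRel K) {p | dist p.1 p.2 < ε}) ≤
      Real.log 3 := by
  have hbound (n : ℕ) : (coverMincard (Gmap fs) univ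
      (entourageProd (cylinderRel K) {p | dist p.1 p.2 < ε}) n : ℝ≥0∞) ≤
      (3 ^ (2 * K + 1) * (⌈ε⁻¹⌉₊ + 1) : ℕ) * (3 ^ n * (n + 1)) := by
    have h := (coverMincard_Gmap_le hmono K n hε).trans (Nat.cast_le.2 (Nat.mul_le_mul
      (le_refl (3 ^ (n + 2 * K + 1))) (floor_div_add_one_le n ε)))
    have h' := ENat.toENNReal_mono h
    simp only [ENat.toENNReal_coe] at h'
    refine h'.trans_eq ?_
    push_cast
    ring
  calc coverEntropyEntourage (Gmap fs) univ _
      ≤ expGrowthSup ((fun n : ℕ => (3 : ℝ≥0∞) ^ n) * fun n : ℕ => (n + 1 : ℝ≥0∞)) :=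
        expGrowthSup_le_of_eventually_le (natCast_ne_top _) (Eventually.of_forall hbound)
    _ ≤ expGrowthSup (fun n : ℕ => (3 : ℝ≥0∞) ^ n) + expGrowthSup fun n : ℕ => (n + 1 : ℝ≥0∞) :=
        expGrowthSup_mul_le (by simp [expGrowthSup_pow, ENNReal.log_three])
          (by simp [expGrowthSup_pow, ENNReal.log_three])
    _ = Real.log 3 := by
        rw [expGrowthSup_pow, expGrowthSup_natCast_add_one, add_zero, ENNReal.log_three]

lemma coverEntropy_Gmap_le
    (hmono : ∀ i, Monotone (fiberStep fs i) ∨ Antitone (fiberStep fs i)) :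
    coverEntropy (Gmap fs) univ ≤ Real.log 3 := by
  rw [coverEntropy_eq_iSup_basis
    (uniformity_basis_cylinderRel.uniformity_prod Metric.uniformity_basis_dist)]
  exact iSup₂_le fun Kε hKε => coverEntropyEntourage_Gmap_le hmono Kε.1 hKε.2

end SkewProduct

lemma fiberStep_continuous_and_monotone_or_antitone {f₀ f₁ f₂ : ℝ → ℝ} {β₀ lam₀ γ β₂ : ℝ}
    (h0 : F0cond f₀ β₀ lam₀) (h1 : F1cond f₁ γ lam₀) (h2 : F2cond f₂ β₂ lam₀) (i : Fin 3) :
    Continuous (fiberStep ![f₀, f₁, f₂] i) ∧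
      (Monotone (fiberStep ![f₀, f₁, f₂] i) ∨ Antitone (fiberStep ![f₀, f₁, f₂] i)) := by
  obtain ⟨hf₀, -, hmono₀, -, -, -, -, -, -, hlam₀, -⟩ := h0
  obtain ⟨hf₁, hlam₀γ, -⟩ := h1
  obtain ⟨hf₂, -, hmono₂, -⟩ := h2
  obtain rfl : f₁ = fun x => γ * (1 - x) := funext hf₁
  fin_cases i
  · exact ⟨fiberStep_continuous hf₀.continuous, .inl (fiberStep_monotone hmono₀.monotoneOn)⟩
  · refine ⟨fiberStep_continuous (by fun_prop : Continuous fun x : ℝ => γ * (1 - x)),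
      .inr (fiberStep_antitone fun x _ y _ hxy => ?_)⟩
    exact mul_le_mul_of_nonneg_left (by linarith) (hlam₀.le.trans hlam₀γ)
  · exact ⟨fiberStep_continuous hf₂.continuous, .inl (fiberStep_monotone hmono₂.monotoneOn)⟩

/-- the topological (cover) entropy of `G` restricted to `Λ_G` is `log 3`. -/
theorem stmt10 (f₀ f₁ f₂ : ℝ → ℝ) (β₀ lam₀ γ β₂ : ℝ)
    (h0 : F0cond f₀ β₀ lam₀) (h1 : F1cond f₁ γ lam₀) (h2 : F2cond f₂ β₂ lam₀) :
    Dynamics.coverEntropy (Gmap ![f₀, f₁, f₂]) (LamG ![f₀, f₁, f₂])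
      = (Real.log 3 : EReal) := by
  have hfib := fiberStep_continuous_and_monotone_or_antitone h0 h1 h2
  exact le_antisymm
    ((coverEntropy_monotone _ (subset_univ _)).trans (coverEntropy_Gmap_le fun i => (hfib i).2))
    (log_three_le_coverEntropy_LamG fun i => (hfib i).1)
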